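/- Moreover, in the combinatorial lemma the choice of balanced element is determined by the sign of μ_n: if 1 - |μ_n| ≤ -(n+d) ≤ |μ_n| - 1 and μ_n ≥ 1 then (w⁺)⁻¹ · (d e₀ + μ) is dominant, while if μ_n ≤ -1 then (w⁻)⁻¹ · (d e₀ + μ) is dominant. -/

import Mathlib

/-- `(w⁺)⁻¹`: `e_{i+1} ↦ e_i` for `0 ≤ i ≤ n-1`, `e₀ ↦ e_n`, acting on `ℤ^{n+1}`. -/
def winvPlus (n : ℕ) : (Fin (n+1) → ℤ) → (Fin (n+1) → ℤ) :=
  fun v j => if h : (j : ℕ) = n then v 0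
    else v ⟨(j : ℕ) + 1, by have := j.isLt; omega⟩

/-- `(w⁻)⁻¹`: `e_{i+1} ↦ e_i` for `0 ≤ i ≤ n-2`, `e_n ↦ -e_{n-1}`, `e₀ ↦ -e_n`. -/
def winvMinus (n : ℕ) : (Fin (n+1) → ℤ) → (Fin (n+1) → ℤ) :=
  fun v j => if h : (j : ℕ) = n then -(v 0)
    else if h2 : (j : ℕ) = n - 1 then -(v (Fin.last n))
    else v ⟨(j : ℕ) + 1, by have := j.isLt; omega⟩

/-- `ρ = Σ_{j=0}^{n} (n-j) e_j`. -/
def rhoZ (n : ℕ) : Fin (n+1) → ℤ := fun j => (n : ℤ) - (j : ℕ)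

/-- The weight `d e₀ + Σ_{j=1}^n μ_j e_j` as a vector in `ℤ^{n+1}`. -/
def lamvec (n : ℕ) (d : ℤ) (μ : Fin n → ℤ) : Fin (n+1) → ℤ :=
  fun i => if h : (i : ℕ) = 0 then d
    else μ ⟨(i : ℕ) - 1, by have := i.isLt; omega⟩

/-- Dominance: `λ₀ ≥ λ₁ ≥ ⋯ ≥ λ_{n-1} ≥ |λ_n|`. -/
def DominantZ (n : ℕ) (l : Fin (n+1) → ℤ) : Prop :=
  (∀ k : Fin n, l k.succ ≤ l k.castSucc) ∧
  |l (Fin.last n)| ≤ l ⟨n - 1, by omega⟩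

/-!
With `λ = d e₀ + μ`, the dot action `w⁻¹ · λ = w⁻¹ (λ + ρ) - ρ` is explicit:
`(w⁺)⁻¹ · λ = (μ₁ - 1, …, μ_n - 1, d + n)` and
`(w⁻)⁻¹ · λ = (μ₁ - 1, …, μ_{n-1} - 1, -μ_n - 1, -(d + n))`.
The hypothesis on `d` says `|d + n| ≤ |μ_n| - 1`, which is exactly the condition on the last
two entries in either case, while the remaining inequalities come from `μ` being
antitone (and `-μ_n ≤ |μ_n| ≤ μ_{n-1}` in the second case).
-/

section DotAction

variable {n : ℕ} (d : ℤ) (μ : Fin n → ℤ)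

theorem winvPlus_dot_lamvec_of_lt (j : Fin (n + 1)) (hj : (j : ℕ) < n) :
    (winvPlus n (lamvec n d μ + rhoZ n) - rhoZ n) j = μ ⟨j, hj⟩ - 1 := by
  simp only [Pi.sub_apply, Pi.add_apply, winvPlus, dif_neg hj.ne, lamvec, rhoZ]
  simp only [Nat.add_eq_zero_iff, one_ne_zero, and_false, ↓reduceDIte, Nat.add_sub_cancel]
  push_cast
  ring

theorem winvPlus_dot_lamvec_last :
    (winvPlus n (lamvec n d μ + rhoZ n) - rhoZ n) (Fin.last n) = d + n := by
  simp [winvPlus, lamvec, rhoZ]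

theorem winvMinus_dot_lamvec_of_lt (j : Fin (n + 1)) (hj : (j : ℕ) + 1 < n) :
    (winvMinus n (lamvec n d μ + rhoZ n) - rhoZ n) j = μ ⟨j, by omega⟩ - 1 := by
  simp only [Pi.sub_apply, Pi.add_apply, winvMinus, dif_neg (show (j : ℕ) ≠ n by omega),
    dif_neg (show (j : ℕ) ≠ n - 1 by omega), lamvec, rhoZ]
  simp only [Nat.add_eq_zero_iff, one_ne_zero, and_false, ↓reduceDIte, Nat.add_sub_cancel]
  push_cast
  ring

theorem winvMinus_dot_lamvec_of_succ_eq (j : Fin (n + 1)) (hj : (j : ℕ) + 1 = n) :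
    (winvMinus n (lamvec n d μ + rhoZ n) - rhoZ n) j = -μ ⟨j, by omega⟩ - 1 := by
  simp only [Pi.sub_apply, Pi.add_apply, winvMinus, dif_neg (show (j : ℕ) ≠ n by omega),
    dif_pos (show (j : ℕ) = n - 1 by omega), lamvec, rhoZ, Fin.val_last,
    dif_neg (show n ≠ 0 by omega)]
  obtain ⟨j, hj'⟩ := j
  obtain rfl : n = j + 1 := hj.symm
  simp

theorem winvMinus_dot_lamvec_last :
    (winvMinus n (lamvec n d μ + rhoZ n) - rhoZ n) (Fin.last n) = -(d + n) := by
  simp [winvMinus, lamvec, rhoZ]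

end DotAction

theorem dominantZ_of_succ_le_of_abs_last_le {n : ℕ} {l : Fin (n + 1) → ℤ}
    (hchain : ∀ k : Fin n, (k : ℕ) + 1 < n → l k.succ ≤ l k.castSucc)
    (hlast : |l (Fin.last n)| ≤ l ⟨n - 1, by omega⟩) : DominantZ n l := by
  refine ⟨fun k => ?_, hlast⟩
  rcases lt_or_eq_of_le (Nat.succ_le_of_lt k.isLt) with hk | hk
  · exact hchain k hk
  · have hsucc : k.succ = Fin.last n := Fin.ext (by simpa using hk)
    have hcast : k.castSucc = ⟨n - 1, by omega⟩ :=
      Fin.ext (by simp only [Fin.val_castSucc]; omega)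
    rw [hsucc, hcast]
    exact (le_abs_self _).trans hlast

theorem antitone_of_le_of_last_le {n : ℕ} (hn : 1 < n) {μ : Fin n → ℤ}
    (hmono : ∀ i j : Fin n, i ≤ j → (j : ℕ) + 1 < n → μ j ≤ μ i)
    (hlast : μ ⟨n - 1, by omega⟩ ≤ μ ⟨n - 2, by omega⟩) : Antitone μ := by
  intro i j hij
  by_cases hj : (j : ℕ) + 1 < n
  · exact hmono i j hij hj
  rcases eq_or_lt_of_le hij with rfl | hi
  · rfl
  have hj' : j = ⟨n - 1, by omega⟩ := Fin.ext (by dsimp only; omega)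
  have hi' : i ≤ ⟨n - 2, by omega⟩ := Fin.mk_le_mk.2 (by rw [Fin.lt_def] at hi; omega)
  rw [hj']
  exact hlast.trans (hmono i _ hi' (by dsimp only; omega))

section Dominance

variable {n : ℕ} (d : ℤ) {μ : Fin n → ℤ}

theorem dominantZ_winvPlus_dot_lamvec (hn : 0 < n) (hμ : Antitone μ)
    (hd : |d + n| ≤ μ ⟨n - 1, by omega⟩ - 1) :
    DominantZ n (winvPlus n (lamvec n d μ + rhoZ n) - rhoZ n) := by
  refine dominantZ_of_succ_le_of_abs_last_le (fun k hk => ?_) ?_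
  · rw [winvPlus_dot_lamvec_of_lt d μ _ hk, winvPlus_dot_lamvec_of_lt d μ _ (by simp)]
    have : μ ⟨k + 1, hk⟩ ≤ μ ⟨k, k.isLt⟩ := hμ (Fin.mk_le_mk.2 (Nat.le_succ _))
    simpa using this
  · rw [winvPlus_dot_lamvec_last, winvPlus_dot_lamvec_of_lt d μ _ (by dsimp only; omega)]
    exact hd

theorem dominantZ_winvMinus_dot_lamvec (hn : 1 < n) (hμ : Antitone μ)
    (hflip : -μ ⟨n - 1, by omega⟩ ≤ μ ⟨n - 2, by omega⟩)
    (hd : |d + n| ≤ -μ ⟨n - 1, by omega⟩ - 1) :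
    DominantZ n (winvMinus n (lamvec n d μ + rhoZ n) - rhoZ n) := by
  refine dominantZ_of_succ_le_of_abs_last_le (fun k hk => ?_) ?_
  · rw [winvMinus_dot_lamvec_of_lt d μ k.castSucc (by simp only [Fin.val_castSucc]; omega)]
    rcases lt_or_eq_of_le (Nat.succ_le_of_lt hk) with hk2 | hk2
    · rw [winvMinus_dot_lamvec_of_lt d μ k.succ (by simpa using hk2)]
      have : μ ⟨k + 1, hk⟩ ≤ μ ⟨k, k.isLt⟩ := hμ (Fin.mk_le_mk.2 (Nat.le_succ _))
      simpa using this
    · rw [winvMinus_dot_lamvec_of_succ_eq d μ k.succ (by simpa using hk2)]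
      have hk1 : (⟨k + 1, hk⟩ : Fin n) = ⟨n - 1, by omega⟩ := Fin.ext (by dsimp only; omega)
      have hk0 : (⟨k, k.isLt⟩ : Fin n) = ⟨n - 2, by omega⟩ := Fin.ext (by dsimp only; omega)
      simp only [Fin.val_succ, Fin.val_castSucc, hk1, hk0]
      linarith
  · rw [winvMinus_dot_lamvec_last, abs_neg,
      winvMinus_dot_lamvec_of_succ_eq d μ _ (by dsimp only; omega)]
    exact hd

end Dominance

/-- under `1 - |μ_n| ≤ -(n+d) ≤ |μ_n| - 1`, the sign of `μ_n`
determines the balanced element: if `μ_n ≥ 1` then `(w⁺)⁻¹ · (d e₀ + μ)` is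
dominant, and if `μ_n ≤ -1` then `(w⁻)⁻¹ · (d e₀ + μ)` is dominant. -/
theorem stmt14 (n : ℕ) (hn : 2 ≤ n) (d : ℤ) (μ : Fin n → ℤ)
    (hmono : ∀ i j : Fin n, i ≤ j → (j : ℕ) + 1 < n → μ j ≤ μ i)
    (hlast : |μ ⟨n - 1, by omega⟩| ≤ μ ⟨n - 2, by omega⟩)
    (hineq : 1 - |μ ⟨n - 1, by omega⟩| ≤ -((n : ℤ) + d) ∧
      -((n : ℤ) + d) ≤ |μ ⟨n - 1, by omega⟩| - 1) :
    (1 ≤ μ ⟨n - 1, by omega⟩ →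
      DominantZ n (winvPlus n (lamvec n d μ + rhoZ n) - rhoZ n)) ∧
    (μ ⟨n - 1, by omega⟩ ≤ -1 →
      DominantZ n (winvMinus n (lamvec n d μ + rhoZ n) - rhoZ n)) := by
  have hμ : Antitone μ := antitone_of_le_of_last_le hn hmono ((le_abs_self _).trans hlast)
  have hd : |d + n| ≤ |μ ⟨n - 1, by omega⟩| - 1 :=
    abs_le.2 ⟨by linarith [hineq.2], by linarith [hineq.1]⟩
  refine ⟨fun hpos => ?_, fun hneg => ?_⟩
  · rw [abs_of_pos (show (0 : ℤ) < μ ⟨n - 1, by omega⟩ by omega)] at hd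
    exact dominantZ_winvPlus_dot_lamvec d (by omega) hμ hd
  · rw [abs_of_neg (show μ ⟨n - 1, by omega⟩ < 0 by omega)] at hd
    exact dominantZ_winvMinus_dot_lamvec d hn hμ ((neg_le_abs _).trans hlast) hd
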